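/- arXiv:2106.07146 — 5 statements merged into one kernel-verified Lean document; each statement's English description precedes it below -/
import Mathlib

section
/- Let ν̂ be a symmetric probability measure on ℝ (invariant under x ↦ −x) with finite second moment, and let ε > 0. Then the double integral ∬ ((x/(ε+x²)) − (y/(ε+y²)))/(x−y) dν̂(x) dν̂(y) = ε (∫ 1/(ε+x²) dν̂(x))², and in particular it is nonnegative. -/
open MeasureTheory

/-!
The integrand splits as `(ε · 1/(ε+y²) - x · y/(ε+y²)) / (ε+x²)`. Against a symmetric
measure the odd function `y/(ε+y²)` integrates to zero, so the inner integral is `ε I / (ε+x²)` with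
`I = ∫ 1/(ε+y²)`, and integrating once more gives `ε I²`.
-/

theorem Function.Odd.integral_eq_zero {G E : Type*} [MeasurableSpace G] [AddGroup G]
    [MeasurableNeg G] [NormedAddCommGroup E] [NormedSpace ℝ E] {μ : Measure G}
    [μ.IsNegInvariant] {f : G → E} (hf : f.Odd) : ∫ x, f x ∂μ = 0 := by
  have h := integral_neg_eq_self f μ
  simp only [hf.eq, integral_neg] at h
  rw [neg_eq_iff_add_eq_zero, ← two_smul ℝ] at h
  simpa using h

section RationalIntegrands

variable {μ : Measure ℝ} [IsFiniteMeasure μ] {ε : ℝ}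

theorem integrable_one_div_add_sq (hε : 0 < ε) :
    Integrable (fun x : ℝ => 1 / (ε + x ^ 2)) μ := by
  refine .of_bound (by fun_prop : Measurable _).aestronglyMeasurable (1 / ε)
    (.of_forall fun x => ?_)
  rw [Real.norm_of_nonneg (by positivity)]
  gcongr
  exact le_add_of_nonneg_right (sq_nonneg x)

theorem integrable_div_add_sq (hε : 0 < ε) :
    Integrable (fun x : ℝ => x / (ε + x ^ 2)) μ := by
  refine .of_bound (by fun_prop : Measurable _).aestronglyMeasurable (1 / (2 * √ε))
    (.of_forall fun x => ?_)
  have hsqrt : 0 < √ε := Real.sqrt_pos.mpr hε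
  rw [Real.norm_eq_abs, abs_div, abs_of_pos (by positivity : 0 < ε + x ^ 2),
    div_le_div_iff₀ (by positivity) (by positivity)]
  -- AM-GM: `2 √ε |x| ≤ ε + x ^ 2`
  nlinarith [sq_nonneg (√ε - |x|), Real.sq_sqrt hε.le, sq_abs x]

theorem integral_sub_mul_div_mul_add_sq (hε : 0 < ε) (x : ℝ) :
    ∫ y, (ε - x * y) / ((ε + x ^ 2) * (ε + y ^ 2)) ∂μ
      = (ε * ∫ y, 1 / (ε + y ^ 2) ∂μ - x * ∫ y, y / (ε + y ^ 2) ∂μ)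
          / (ε + x ^ 2) := by
  have hsplit : ∀ y : ℝ, (ε - x * y) / ((ε + x ^ 2) * (ε + y ^ 2))
      = (ε * (1 / (ε + y ^ 2)) - x * (y / (ε + y ^ 2))) / (ε + x ^ 2) := fun y => by
    field_simp
  simp_rw [hsplit]
  rw [integral_div, integral_sub ((integrable_one_div_add_sq hε).const_mul ε)
    ((integrable_div_add_sq hε).const_mul x), integral_const_mul, integral_const_mul]

end RationalIntegrands

theorem stmt3_general (ν : Measure ℝ) [IsProbabilityMeasure ν]
    (hsym : ν.map (fun x : ℝ => -x) = ν)
    (ε : ℝ) (hε : 0 < ε) :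
    (∫ x, ∫ y, (ε - x * y) / ((ε + x ^ 2) * (ε + y ^ 2)) ∂ν ∂ν
        = ε * (∫ x, 1 / (ε + x ^ 2) ∂ν) ^ 2)
    ∧ 0 ≤ ∫ x, ∫ y, (ε - x * y) / ((ε + x ^ 2) * (ε + y ^ 2)) ∂ν ∂ν := by
  have : ν.IsNegInvariant := ⟨hsym⟩
  have hodd : ∫ y, y / (ε + y ^ 2) ∂ν = 0 :=
    Function.Odd.integral_eq_zero fun y => by rw [neg_sq, neg_div]
  have hinner : ∀ x : ℝ, ∫ y, (ε - x * y) / ((ε + x ^ 2) * (ε + y ^ 2)) ∂ν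
      = ε * (∫ y, 1 / (ε + y ^ 2) ∂ν) * (1 / (ε + x ^ 2)) := fun x => by
    rw [integral_sub_mul_div_mul_add_sq hε, hodd]
    ring
  have heq : ∫ x, ∫ y, (ε - x * y) / ((ε + x ^ 2) * (ε + y ^ 2)) ∂ν ∂ν
      = ε * (∫ x, 1 / (ε + x ^ 2) ∂ν) ^ 2 := by
    simp_rw [hinner, integral_const_mul]
    ring
  exact ⟨heq, heq ▸ by positivity⟩

theorem stmt3 (ν : Measure ℝ) [IsProbabilityMeasure ν]
    (hsym : ν.map (fun x : ℝ => -x) = ν)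
    (hmom : Integrable (fun x : ℝ => x ^ 2) ν)
    (ε : ℝ) (hε : 0 < ε) :
    (∫ x, ∫ y, (ε - x * y) / ((ε + x ^ 2) * (ε + y ^ 2)) ∂ν ∂ν
        = ε * (∫ x, 1 / (ε + x ^ 2) ∂ν) ^ 2)
    ∧ 0 ≤ ∫ x, ∫ y, (ε - x * y) / ((ε + x ^ 2) * (ε + y ^ 2)) ∂ν ∂ν :=
  stmt3_general ν hsym ε hε
end

section
/- Let x(t) = (x_1(t),…,x_n(t)) and x̃(t) = (x̃_1(t),…,x̃_n(t)) be two solutions of the Dyson Brownian motion dx_i = dW_i/√(βn) + (1/(2n))∑_{j≠i} dt/(x_i − x_j) driven by the same Brownian motions, both with strictly ordered particles for t > 0. Then t ↦ ∑_{i=1}^n (x̃_i(t) − x_i(t))² is nonincreasing; equivalently (d/dt)∑_i(x̃_i(t)−x_i(t))² = −(1/n)∑_{i<j} ((x̃_i−x_i)−(x̃_j−x_j))²/((x̃_i−x̃_j)(x_i−x_j)) ≤ 0. -/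
/-!
Since both processes are driven by the same noise, `f := x̃ - x` solves the ODE
`f'ᵢ = (1/2n) ∑_{j ≠ i} (1/(x̃ᵢ - x̃ⱼ) - 1/(xᵢ - xⱼ))`. Pairing the terms `(i, j)` and `(j, i)` in
`(∑ fᵢ²)' = 2 ∑ᵢ fᵢ f'ᵢ` and writing `p = x̃ᵢ - x̃ⱼ`, `q = xᵢ - xⱼ`, so that `fᵢ - fⱼ = p - q`, each pair
contributes `(p - q)(1/p - 1/q) = -(p - q)²/(pq)`, which is `≤ 0` because both configurations are
ordered the same way.
-/

open Finset

lemma sub_mul_one_div_sub_one_div {K : Type*} [Field K] {p q : K} (hp : p ≠ 0) (hq : q ≠ 0) :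
    (p - q) * (1 / p - 1 / q) = -((p - q) ^ 2 / (p * q)) := by
  field_simp
  ring

lemma sum_sum_filter_ne_eq_sum_sum_filter_lt {ι M : Type*} [Fintype ι] [LinearOrder ι]
    [AddCommMonoid M] (c : ι → ι → M) :
    ∑ i, ∑ j ∈ univ.filter (fun j => j ≠ i), c i j
      = ∑ i, ∑ j ∈ univ.filter (fun j => i < j), (c i j + c j i) := by
  have hsplit : ∀ i, ∑ j ∈ univ.filter (fun j => j ≠ i), c i j
      = ∑ j ∈ univ.filter (fun j => i < j), c i j + ∑ j ∈ univ.filter (fun j => j < i), c i j := by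
    intro i
    rw [← sum_union (disjoint_filter.2 fun j _ h₁ h₂ => lt_asymm h₁ h₂)]
    congr 1
    ext j
    simp only [mem_filter, mem_union, mem_univ, true_and, lt_or_lt_iff_ne, ne_comm]
  have hswap : ∑ i, ∑ j ∈ univ.filter (fun j => j < i), c i j
      = ∑ i, ∑ j ∈ univ.filter (fun j => i < j), c j i := by
    simp only [sum_filter]
    exact sum_comm
  simp only [hsplit, sum_add_distrib, hswap]

lemma sum_mul_sum_filter_ne_one_div_sub {ι K : Type*} [Fintype ι] [LinearOrder ι] [Field K]
    {a b : ι → K} (ha : Function.Injective a) (hb : Function.Injective b) :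
    ∑ i, (a i - b i) * ∑ j ∈ univ.filter (fun j => j ≠ i), (1 / (a i - a j) - 1 / (b i - b j))
      = -∑ i, ∑ j ∈ univ.filter (fun j => i < j),
          ((a i - b i) - (a j - b j)) ^ 2 / ((a i - a j) * (b i - b j)) := by
  simp only [mul_sum, sum_sum_filter_ne_eq_sum_sum_filter_lt, ← sum_neg_distrib]
  refine sum_congr rfl fun i _ => sum_congr rfl fun j hj => ?_
  have hij : i ≠ j := (mem_filter.1 hj).2.ne
  have hpair : (a i - b i) * (1 / (a i - a j) - 1 / (b i - b j))
      + (a j - b j) * (1 / (a j - a i) - 1 / (b j - b i))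
      = ((a i - a j) - (b i - b j)) * (1 / (a i - a j) - 1 / (b i - b j)) := by
    rw [← neg_sub (a i) (a j), ← neg_sub (b i) (b j), div_neg, div_neg]
    ring
  rw [hpair, sub_mul_one_div_sub_one_div (sub_ne_zero.2 (ha.ne hij)) (sub_ne_zero.2 (hb.ne hij))]
  ring

lemma sum_sum_filter_lt_sq_div_nonneg {ι : Type*} [Fintype ι] [LinearOrder ι]
    {a b : ι → ℝ} (hab : Monovary a b) (f : ι → ℝ) :
    0 ≤ ∑ i, ∑ j ∈ univ.filter (fun j => i < j), (f i - f j) ^ 2 / ((a i - a j) * (b i - b j)) :=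
  sum_nonneg fun i _ => sum_nonneg fun j _ =>
    div_nonneg (sq_nonneg _) (hab.sub_mul_sub_nonneg j i)

lemma hasDerivAt_sum_sq {ι : Type*} [Fintype ι] {F : ι → ℝ → ℝ} {F' : ι → ℝ} {t : ℝ}
    (hF : ∀ i, HasDerivAt (F i) (F' i) t) :
    HasDerivAt (fun u => ∑ i, F i u ^ 2) (∑ i, 2 * F i t * F' i) t := by
  refine HasDerivAt.fun_sum fun i _ => ?_
  simpa [mul_comm] using (hF i).fun_pow 2

theorem stmt5_general (n : ℕ) (T : ℝ)
    (x xt : Fin n → ℝ → ℝ)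
    (hord : ∀ t ∈ Set.Icc (0:ℝ) T, ∀ i j : Fin n, i < j → x j t < x i t)
    (hordt : ∀ t ∈ Set.Icc (0:ℝ) T, ∀ i j : Fin n, i < j → xt j t < xt i t)
    (hdiff : ∀ i : Fin n, ∀ t ∈ Set.Icc (0:ℝ) T,
      HasDerivAt (fun u => xt i u - x i u)
        ((1 / (2 * (n:ℝ))) * ∑ j ∈ Finset.univ.filter (fun j => j ≠ i),
          (1 / (xt i t - xt j t) - 1 / (x i t - x j t))) t) :
    (∀ t ∈ Set.Icc (0:ℝ) T,
      HasDerivAt (fun u => ∑ i : Fin n, (xt i u - x i u) ^ 2)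
        (-(1 / (n:ℝ)) * ∑ i : Fin n, ∑ j ∈ Finset.univ.filter (fun j => i < j),
            ((xt i t - x i t) - (xt j t - x j t)) ^ 2
              / ((xt i t - xt j t) * (x i t - x j t))) t
      ∧ -(1 / (n:ℝ)) * ∑ i : Fin n, ∑ j ∈ Finset.univ.filter (fun j => i < j),
            ((xt i t - x i t) - (xt j t - x j t)) ^ 2
              / ((xt i t - xt j t) * (x i t - x j t)) ≤ 0)
    ∧ AntitoneOn (fun t => ∑ i : Fin n, (xt i t - x i t) ^ 2) (Set.Icc (0:ℝ) T) := by
  have hderiv : ∀ t ∈ Set.Icc (0:ℝ) T,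
      HasDerivAt (fun u => ∑ i : Fin n, (xt i u - x i u) ^ 2)
        (-(1 / (n:ℝ)) * ∑ i : Fin n, ∑ j ∈ Finset.univ.filter (fun j => i < j),
            ((xt i t - x i t) - (xt j t - x j t)) ^ 2
              / ((xt i t - xt j t) * (x i t - x j t))) t := by
    intro t ht
    have hx : StrictAnti fun i => x i t := hord t ht
    have hxt : StrictAnti fun i => xt i t := hordt t ht
    convert hasDerivAt_sum_sq fun i => hdiff i t ht using 1
    rw [neg_mul, ← mul_neg, ← sum_mul_sum_filter_ne_one_div_sub hxt.injective hx.injective, mul_sum]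
    refine sum_congr rfl fun i _ => ?_
    ring
  have hnonpos : ∀ t ∈ Set.Icc (0:ℝ) T,
      -(1 / (n:ℝ)) * ∑ i : Fin n, ∑ j ∈ Finset.univ.filter (fun j => i < j),
            ((xt i t - x i t) - (xt j t - x j t)) ^ 2
              / ((xt i t - xt j t) * (x i t - x j t)) ≤ 0 := fun t ht =>
    mul_nonpos_of_nonpos_of_nonneg (by simp) <| sum_sum_filter_lt_sq_div_nonneg
      ((StrictAnti.antitone (hordt t ht)).monovary (StrictAnti.antitone (hord t ht))) _
  refine ⟨fun t ht => ⟨hderiv t ht, hnonpos t ht⟩, ?_⟩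
  exact antitoneOn_of_hasDerivWithinAt_nonpos (convex_Icc 0 T)
    (fun t ht => (hderiv t ht).continuousAt.continuousWithinAt)
    (fun t ht => (hderiv t (interior_subset ht)).hasDerivWithinAt)
    (fun t ht => hnonpos t (interior_subset ht))

/-- Two Dyson Brownian motions driven by the same noise: the squared distance between
particle configurations is nonincreasing, with explicit nonpositive derivative. -/
theorem stmt5 (n : ℕ) (hn : 1 ≤ n) (β : ℝ) (hβ : 1 ≤ β) (T : ℝ) (hT : 0 < T)
    (x xt : Fin n → ℝ → ℝ)
    (hord : ∀ t ∈ Set.Icc (0:ℝ) T, ∀ i j : Fin n, i < j → x j t < x i t)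
    (hordt : ∀ t ∈ Set.Icc (0:ℝ) T, ∀ i j : Fin n, i < j → xt j t < xt i t)
    (hdiff : ∀ i : Fin n, ∀ t ∈ Set.Icc (0:ℝ) T,
      HasDerivAt (fun u => xt i u - x i u)
        ((1 / (2 * (n:ℝ))) * ∑ j ∈ Finset.univ.filter (fun j => j ≠ i),
          (1 / (xt i t - xt j t) - 1 / (x i t - x j t))) t) :
    (∀ t ∈ Set.Icc (0:ℝ) T,
      HasDerivAt (fun u => ∑ i : Fin n, (xt i u - x i u) ^ 2)
        (-(1 / (n:ℝ)) * ∑ i : Fin n, ∑ j ∈ Finset.univ.filter (fun j => i < j),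
            ((xt i t - x i t) - (xt j t - x j t)) ^ 2
              / ((xt i t - xt j t) * (x i t - x j t))) t
      ∧ -(1 / (n:ℝ)) * ∑ i : Fin n, ∑ j ∈ Finset.univ.filter (fun j => i < j),
            ((xt i t - x i t) - (xt j t - x j t)) ^ 2
              / ((xt i t - xt j t) * (x i t - x j t)) ≤ 0)
    ∧ AntitoneOn (fun t => ∑ i : Fin n, (xt i t - x i t) ^ 2) (Set.Icc (0:ℝ) T) :=
  stmt5_general n T x xt hord hordt hdiff
end

section
/- Let s(t) and s̃(t) be two solutions of the Dyson Bessel process ds_i = dW_i/√(βn) + [(1/(2n))∑_{j≠i} 1/(s_i−s_j) + (1/(2n))∑_{j≠i} 1/(s_i+s_j) + α_n/(2s_i)] dt driven by the same Brownian motions, with all particles strictly positive and strictly ordered, and α_n ≥ 0. Then t ↦ ∑_{i=1}^n (s̃_i(t) − s_i(t))² is nonincreasing. -/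
open Finset

/-! The drift is a monotone decreasing field on the positive Weyl chamber. Pairing the difference
`y - x` of two configurations with the difference of their drifts, the interaction terms
symmetrize over pairs `{i, j}`, and every resulting term, like the `αn` term, has the form
`(u - v) * (1 / u - 1 / v) ≤ 0` with `u`, `v` of the same sign (`u`, `v` being `y i ∓ y j`
and `x i ∓ x j`, or `y i` and `x i`). The derivative of the squared distance is twice this
pairing, hence nonpositive. -/

lemma sub_mul_one_div_sub_one_div_nonpos {K : Type*} [Field K] [LinearOrder K]
    [IsStrictOrderedRing K] {u v : K} (h : 0 < u * v) :
    (u - v) * (1 / u - 1 / v) ≤ 0 := by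
  have hu : u ≠ 0 := left_ne_zero_of_mul h.ne'
  have hv : v ≠ 0 := right_ne_zero_of_mul h.ne'
  have : (u - v) * (1 / u - 1 / v) = -((u - v) ^ 2 / (u * v)) := by
    field_simp
    ring
  rw [this]
  exact neg_nonpos.mpr (div_nonneg (sq_nonneg _) h.le)

lemma sum_sum_ne_nonpos_of_add_swap_nonpos {ι : Type*} [Fintype ι] [DecidableEq ι]
    (f : ι → ι → ℝ) (h : ∀ i j, i ≠ j → f i j + f j i ≤ 0) :
    ∑ i, ∑ j ∈ univ.filter (· ≠ i), f i j ≤ 0 := by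
  simp only [sum_filter]
  have hswap : ∑ i, ∑ j, (if j ≠ i then f i j else 0)
      = ∑ i, ∑ j, (if i ≠ j then f j i else 0) := sum_comm
  suffices ∑ i, ∑ j, ((if j ≠ i then f i j else 0) + if i ≠ j then f j i else 0) ≤ 0 by
    simp only [sum_add_distrib, ← hswap] at this
    linarith
  refine sum_nonpos fun i _ => sum_nonpos fun j _ => ?_
  by_cases hij : i = j
  · simp [hij]
  · simpa [hij, Ne.symm hij] using h i j hij

lemma StrictAnti.sub_mul_sub_pos {ι R : Type*} [LinearOrder ι] [Ring R] [LinearOrder R]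
    [IsStrictOrderedRing R] {x y : ι → R} (hx : StrictAnti x) (hy : StrictAnti y) {i j : ι}
    (hij : i ≠ j) : 0 < (x i - x j) * (y i - y j) := by
  rcases hij.lt_or_gt with h | h
  · exact mul_pos (sub_pos.mpr (hx h)) (sub_pos.mpr (hy h))
  · exact mul_pos_of_neg_of_neg (sub_neg.mpr (hx h)) (sub_neg.mpr (hy h))

noncomputable def dysonBesselDrift (n : ℕ) (αn : ℝ) (x : Fin n → ℝ) (i : Fin n) : ℝ :=
  1 / (2 * (n : ℝ)) * ∑ j ∈ univ.filter (· ≠ i), 1 / (x i - x j)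
    + 1 / (2 * (n : ℝ)) * ∑ j ∈ univ.filter (· ≠ i), 1 / (x i + x j) + αn / (2 * x i)

theorem sum_sub_mul_dysonBesselDrift_sub_nonpos {n : ℕ} {αn : ℝ} (hα : 0 ≤ αn)
    {x y : Fin n → ℝ} (hx : ∀ i, 0 < x i) (hy : ∀ i, 0 < y i)
    (hxa : StrictAnti x) (hya : StrictAnti y) :
    ∑ i, (y i - x i) * (dysonBesselDrift n αn y i - dysonBesselDrift n αn x i) ≤ 0 := by
  have hdiffs : ∑ i, ∑ j ∈ univ.filter (· ≠ i),
      (y i - x i) * (1 / (y i - y j) - 1 / (x i - x j)) ≤ 0 := by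
    refine sum_sum_ne_nonpos_of_add_swap_nonpos _ fun i j hij => ?_
    have hpair : (y i - x i) * (1 / (y i - y j) - 1 / (x i - x j))
        + (y j - x j) * (1 / (y j - y i) - 1 / (x j - x i))
        = ((y i - y j) - (x i - x j)) * (1 / (y i - y j) - 1 / (x i - x j)) := by
      rw [← neg_sub (y i) (y j), ← neg_sub (x i) (x j), div_neg, div_neg]
      ring
    rw [hpair]
    exact sub_mul_one_div_sub_one_div_nonpos (hya.sub_mul_sub_pos hxa hij)
  have hsums : ∑ i, ∑ j ∈ univ.filter (· ≠ i),
      (y i - x i) * (1 / (y i + y j) - 1 / (x i + x j)) ≤ 0 := by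
    refine sum_sum_ne_nonpos_of_add_swap_nonpos _ fun i j _ => ?_
    have hpair : (y i - x i) * (1 / (y i + y j) - 1 / (x i + x j))
        + (y j - x j) * (1 / (y j + y i) - 1 / (x j + x i))
        = ((y i + y j) - (x i + x j)) * (1 / (y i + y j) - 1 / (x i + x j)) := by
      rw [add_comm (y j), add_comm (x j)]
      ring
    rw [hpair]
    exact sub_mul_one_div_sub_one_div_nonpos
      (mul_pos (add_pos (hy i) (hy j)) (add_pos (hx i) (hx j)))
  have hsingle : ∑ i, (y i - x i) * (1 / y i - 1 / x i) ≤ 0 :=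
    sum_nonpos fun i _ => sub_mul_one_div_sub_one_div_nonpos (mul_pos (hy i) (hx i))
  have hexpand : ∑ i, (y i - x i) * (dysonBesselDrift n αn y i - dysonBesselDrift n αn x i)
      = 1 / (2 * (n : ℝ)) * ∑ i, ∑ j ∈ univ.filter (· ≠ i),
          (y i - x i) * (1 / (y i - y j) - 1 / (x i - x j))
        + 1 / (2 * (n : ℝ)) * ∑ i, ∑ j ∈ univ.filter (· ≠ i),
          (y i - x i) * (1 / (y i + y j) - 1 / (x i + x j))
        + αn / 2 * ∑ i, (y i - x i) * (1 / y i - 1 / x i) := by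
    rw [mul_sum, mul_sum, mul_sum, ← sum_add_distrib, ← sum_add_distrib]
    refine sum_congr rfl fun i _ => ?_
    rw [← mul_sum, ← mul_sum, sum_sub_distrib, sum_sub_distrib]
    simp only [dysonBesselDrift]
    ring
  rw [hexpand]
  have hc : 0 ≤ 1 / (2 * (n : ℝ)) := by positivity
  have := mul_nonpos_of_nonneg_of_nonpos hc hdiffs
  have := mul_nonpos_of_nonneg_of_nonpos hc hsums
  have := mul_nonpos_of_nonneg_of_nonpos (by positivity : 0 ≤ αn / 2) hsingle
  linarith

theorem stmt6_general (n : ℕ) (αn : ℝ) (hα : 0 ≤ αn) (T : ℝ)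
    (s st : Fin n → ℝ → ℝ)
    (hpos : ∀ t ∈ Set.Icc (0:ℝ) T, ∀ i : Fin n, 0 < s i t)
    (hpost : ∀ t ∈ Set.Icc (0:ℝ) T, ∀ i : Fin n, 0 < st i t)
    (hord : ∀ t ∈ Set.Icc (0:ℝ) T, ∀ i j : Fin n, i < j → s j t < s i t)
    (hordt : ∀ t ∈ Set.Icc (0:ℝ) T, ∀ i j : Fin n, i < j → st j t < st i t)
    (hdiff : ∀ i : Fin n, ∀ t ∈ Set.Icc (0:ℝ) T,
      HasDerivAt (fun u => st i u - s i u)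
        (((1 / (2 * (n:ℝ))) * ∑ j ∈ Finset.univ.filter (fun j => j ≠ i), 1 / (st i t - st j t)
            + (1 / (2 * (n:ℝ))) * ∑ j ∈ Finset.univ.filter (fun j => j ≠ i), 1 / (st i t + st j t)
            + αn / (2 * st i t))
          - ((1 / (2 * (n:ℝ))) * ∑ j ∈ Finset.univ.filter (fun j => j ≠ i), 1 / (s i t - s j t)
            + (1 / (2 * (n:ℝ))) * ∑ j ∈ Finset.univ.filter (fun j => j ≠ i), 1 / (s i t + s j t)
            + αn / (2 * s i t))) t) :
    AntitoneOn (fun t => ∑ i : Fin n, (st i t - s i t) ^ 2) (Set.Icc (0:ℝ) T) := by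
  have hderiv : ∀ t ∈ Set.Icc 0 T, HasDerivAt (fun u => ∑ i : Fin n, (st i u - s i u) ^ 2)
      (2 * ∑ i, (st i t - s i t) *
        (dysonBesselDrift n αn (st · t) i - dysonBesselDrift n αn (s · t) i)) t := by
    intro t ht
    rw [mul_sum]
    refine HasDerivAt.fun_sum fun i _ => ?_
    have hdrift : HasDerivAt (fun u => st i u - s i u)
        (dysonBesselDrift n αn (st · t) i - dysonBesselDrift n αn (s · t) i) t := hdiff i t ht
    exact (hdrift.fun_pow 2).congr_deriv (by ring)
  refine antitoneOn_of_hasDerivWithinAt_nonpos (convex_Icc 0 T)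
    (fun t ht => (hderiv t ht).continuousAt.continuousWithinAt)
    (fun t ht => (hderiv t (interior_subset ht)).hasDerivWithinAt) fun t ht => ?_
  have ht := interior_subset ht
  exact mul_nonpos_of_nonneg_of_nonpos zero_le_two
    (sum_sub_mul_dysonBesselDrift_sub_nonpos hα (hpos t ht) (hpost t ht) (hord t ht) (hordt t ht))

/-- Two Dyson Bessel processes driven by the same noise: the squared distance between
particle configurations is nonincreasing. -/
theorem stmt6 (n : ℕ) (hn : 1 ≤ n) (β αn : ℝ) (hβ : 1 ≤ β) (hα : 0 ≤ αn)
    (T : ℝ) (hT : 0 < T)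
    (s st : Fin n → ℝ → ℝ)
    (hpos : ∀ t ∈ Set.Icc (0:ℝ) T, ∀ i : Fin n, 0 < s i t)
    (hpost : ∀ t ∈ Set.Icc (0:ℝ) T, ∀ i : Fin n, 0 < st i t)
    (hord : ∀ t ∈ Set.Icc (0:ℝ) T, ∀ i j : Fin n, i < j → s j t < s i t)
    (hordt : ∀ t ∈ Set.Icc (0:ℝ) T, ∀ i j : Fin n, i < j → st j t < st i t)
    (hdiff : ∀ i : Fin n, ∀ t ∈ Set.Icc (0:ℝ) T,
      HasDerivAt (fun u => st i u - s i u)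
        (((1 / (2 * (n:ℝ))) * ∑ j ∈ Finset.univ.filter (fun j => j ≠ i), 1 / (st i t - st j t)
            + (1 / (2 * (n:ℝ))) * ∑ j ∈ Finset.univ.filter (fun j => j ≠ i), 1 / (st i t + st j t)
            + αn / (2 * st i t))
          - ((1 / (2 * (n:ℝ))) * ∑ j ∈ Finset.univ.filter (fun j => j ≠ i), 1 / (s i t - s j t)
            + (1 / (2 * (n:ℝ))) * ∑ j ∈ Finset.univ.filter (fun j => j ≠ i), 1 / (s i t + s j t)
            + αn / (2 * s i t))) t) :
    AntitoneOn (fun t => ∑ i : Fin n, (st i t - s i t) ^ 2) (Set.Icc (0:ℝ) T) :=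
  stmt6_general n αn hα T s st hpos hpost hord hordt hdiff
end

section
/- Let ρ : ℝ → [0,∞) be a probability density with ‖ρ'‖_∞ < ∞, and let γ_i, γ_{i+k} satisfy ∫_{γ_i}^{γ_{i+k}} ρ(x)dx = k/n with γ_{i+k} > γ_i. If ρ(γ_i) > 0 and k‖ρ'‖_∞ ≤ n·ρ(γ_i)²/2, then |γ_{i+k} − γ_i − k/(n ρ(γ_i))| ≤ C·(k/(n ρ(γ_i)))·(k‖ρ'‖_∞/(n ρ(γ_i)²)) for an absolute constant C. -/
/-
Since |ρ'| ≤ K, on [γᵢ, γᵢ₊ₖ] the density stays within K (x - γᵢ) of r = ρ(γᵢ), so the mass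
k/n of the interval is (γᵢ₊ₖ - γᵢ) r up to K (γᵢ₊ₖ - γᵢ)² / 2. Dividing by r gives the claim
with C = 2 once the gap is known to be at most 2k/(n r). For that, note that under
2 (k/n) K ≤ r² the minorant r - K (x - γᵢ) alone already carries mass ≥ k/n on
[γᵢ, γᵢ + 2k/(n r)]. A longer gap is only possible in the equality case, where ρ must coincide
with this minorant and vanish at its right end: a zero of the nonnegative, differentiable ρ
at which its one-sided slope is -K, forcing K = 0 and r = 0.
-/

open MeasureTheory Set Filter intervalIntegral

theorem integral_mul_sub_left (K a b : ℝ) :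
    ∫ x in a..b, K * (x - a) = K * (b - a) ^ 2 / 2 := by
  rw [intervalIntegral.integral_const_mul,
    intervalIntegral.integral_comp_sub_right (fun x => x), integral_id]
  ring

theorem abs_integral_sub_mul_le {ρ : ℝ → ℝ} {K a b : ℝ} (hab : a ≤ b)
    (hρ : ∀ x ∈ Icc a b, |ρ x - ρ a| ≤ K * (x - a)) (hc : ContinuousOn ρ (Icc a b)) :
    |(∫ x in a..b, ρ x) - (b - a) * ρ a| ≤ K * (b - a) ^ 2 / 2 := by
  have hsub : (∫ x in a..b, ρ x) - (b - a) * ρ a = ∫ x in a..b, (ρ x - ρ a) := by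
    rw [intervalIntegral.integral_sub (hc.intervalIntegrable_of_Icc hab) intervalIntegrable_const,
      intervalIntegral.integral_const, smul_eq_mul]
  rw [hsub, ← integral_mul_sub_left]
  exact intervalIntegral.norm_integral_le_of_norm_le (f := fun x => ρ x - ρ a) hab
    (ae_of_all _ fun x hx => hρ x (Ioc_subset_Icc_self hx))
    ((by fun_prop : Continuous fun x => K * (x - a)).intervalIntegrable _ _)

theorem eqOn_of_le_of_integral_le {f g : ℝ → ℝ} {a b : ℝ} (hab : a < b)
    (hf : ContinuousOn f (Icc a b)) (hg : ContinuousOn g (Icc a b))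
    (hle : ∀ x ∈ Icc a b, f x ≤ g x) (hint : (∫ x in a..b, g x) ≤ ∫ x in a..b, f x) :
    EqOn f g (Icc a b) := by
  intro x hx
  by_contra hne
  exact hint.not_gt <| integral_lt_integral_of_continuousOn_of_le_of_exists_lt hab hf hg
    (fun y hy => hle y (Ioc_subset_Icc_self hy)) ⟨x, hx, (hle x hx).lt_of_ne hne⟩

theorem IsLocalMin.eq_zero_of_hasDerivWithinAt_Icc {f : ℝ → ℝ} {a p c : ℝ} (hap : a < p)
    (hmin : IsLocalMin f p) (hf : DifferentiableAt ℝ f p)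
    (hc : HasDerivWithinAt f c (Icc a p) p) : c = 0 := by
  have hunique : UniqueDiffWithinAt ℝ (Icc a p) p := uniqueDiffOn_Icc hap p (right_mem_Icc.2 hap.le)
  rw [hunique.eq_deriv _ hc hf.hasDerivAt.hasDerivWithinAt]
  exact hmin.deriv_eq_zero

theorem eq_zero_of_eqOn_mul_sub_of_nonneg {f : ℝ → ℝ} {a p c : ℝ} (hap : a < p)
    (hnn : ∀ᶠ x in nhds p, 0 ≤ f x) (hf : DifferentiableAt ℝ f p)
    (heq : EqOn (fun x => c * (p - x)) f (Icc a p)) : c = 0 := by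
  have hp : p ∈ Icc a p := right_mem_Icc.2 hap.le
  have hzero : f p = 0 := by simpa using (heq hp).symm
  have hmin : IsLocalMin f p := hnn.mono fun x hx => hzero ▸ hx
  have hderiv : HasDerivWithinAt f (-c) (Icc a p) p := by
    have h := ((hasDerivAt_id p).const_sub p).const_mul c
    simp only [mul_neg, mul_one] at h
    exact h.hasDerivWithinAt.congr_of_mem (fun x hx => (heq hx).symm) hp
  exact neg_eq_zero.1 (hmin.eq_zero_of_hasDerivWithinAt_Icc hap hf hderiv)

theorem sub_le_two_mul_div_of_integral_eq {ρ : ℝ → ℝ} {K a b m : ℝ}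
    (hnn : ∀ x ∈ Icc a b, 0 ≤ ρ x) (hd : Differentiable ℝ ρ)
    (hρ : ∀ x ∈ Icc a b, ρ a - K * (x - a) ≤ ρ x)
    (hint : ∫ x in a..b, ρ x = m) (hm : 0 < m) (hr : 0 < ρ a) (hKm : 2 * m * K ≤ ρ a ^ 2) :
    b - a ≤ 2 * m / ρ a := by
  by_contra! hlong
  set r := ρ a
  set s := 2 * m / r with hs_def
  have hs : 0 < s := by positivity
  have hsr : s * r = 2 * m := div_mul_cancel₀ _ hr.ne'
  have hap : a < a + s := by linarith
  have hpb : a + s < b := by linarith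
  have hsub : Icc a (a + s) ⊆ Icc a b := Icc_subset_Icc_right hpb.le
  have hcont : ContinuousOn ρ (Icc a (a + s)) := hd.continuous.continuousOn
  have hupper : ∫ x in a..a + s, ρ x ≤ m := hint ▸ integral_mono_interval le_rfl hap.le hpb.le
    ((ae_restrict_iff' measurableSet_Ioc).2 (ae_of_all _ fun x hx => hnn x (Ioc_subset_Icc_self hx)))
    (hd.continuous.intervalIntegrable _ _)
  have hlin : ∫ x in a..a + s, (r - K * (x - a)) = s * r - K * s ^ 2 / 2 := by
    rw [intervalIntegral.integral_sub intervalIntegrable_const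
      ((by fun_prop : Continuous fun x => K * (x - a)).intervalIntegrable _ _),
      intervalIntegral.integral_const, integral_mul_sub_left, smul_eq_mul]
    ring
  have hlower : m ≤ s * r - K * s ^ 2 / 2 := by
    have : K * s ^ 2 / 2 * r ^ 2 = 2 * m * K * m := by rw [hs_def]; field_simp
    nlinarith [mul_le_mul_of_nonneg_right hKm hm.le]
  have heq : EqOn (fun x => r - K * (x - a)) ρ (Icc a (a + s)) :=
    eqOn_of_le_of_integral_le hap (by fun_prop) hcont (fun x hx => hρ x (hsub hx))
      (by rw [hlin]; linarith)
  have hmass : ∫ x in a..a + s, ρ x = s * r - K * s ^ 2 / 2 := by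
    rw [← hlin, intervalIntegral.integral_congr]
    rwa [uIcc_of_le hap.le, eqOn_comm]
  have hKs : K * s = r := by
    have : K * s * s = r * s := by nlinarith
    exact mul_right_cancel₀ hs.ne' this
  have htent : EqOn (fun x => K * (a + s - x)) ρ (Icc a (a + s)) := fun x hx => by
    rw [← heq hx, ← hKs]
    ring
  have hK : K = 0 := eq_zero_of_eqOn_mul_sub_of_nonneg hap
    (Filter.mem_of_superset (Icc_mem_nhds hap hpb) hnn) (hd _) htent
  exact hr.ne' (by rw [← hKs, hK, zero_mul])

theorem abs_sub_div_le_of_integral_eq {ρ : ℝ → ℝ} {K a b m : ℝ}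
    (hnn : ∀ x ∈ Icc a b, 0 ≤ ρ x) (hd : Differentiable ℝ ρ) (hK : ∀ x ∈ Ico a b, |deriv ρ x| ≤ K)
    (hab : a < b) (hint : ∫ x in a..b, ρ x = m) (hm : 0 < m) (hr : 0 < ρ a)
    (hKm : 2 * m * K ≤ ρ a ^ 2) :
    |b - a - m / ρ a| ≤ 2 * (m / ρ a) * (m * K / ρ a ^ 2) := by
  have hK0 : 0 ≤ K := (abs_nonneg _).trans (hK a (left_mem_Ico.2 hab))
  have hlip : ∀ x ∈ Icc a b, |ρ x - ρ a| ≤ K * (x - a) :=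
    norm_image_sub_le_of_norm_deriv_le_segment' (fun x _ => (hd x).hasDerivAt.hasDerivWithinAt) hK
  have hclose := abs_integral_sub_mul_le hab.le hlip hd.continuous.continuousOn
  have hshort : b - a ≤ 2 * m / ρ a := sub_le_two_mul_div_of_integral_eq hnn hd
    (fun x hx => by linarith [(abs_le.1 (hlip x hx)).1]) hint hm hr hKm
  rw [hint] at hclose
  calc |b - a - m / ρ a| = |m - (b - a) * ρ a| / ρ a := by
        rw [sub_div' hr.ne', abs_div, abs_of_pos hr, abs_sub_comm]
    _ ≤ K * (b - a) ^ 2 / 2 / ρ a := by gcongr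
    _ ≤ K * (2 * m / ρ a) ^ 2 / 2 / ρ a := by gcongr
    _ = 2 * (m / ρ a) * (m * K / ρ a ^ 2) := by field_simp

/-- Quantile gaps: if ∫_{γᵢ}^{γᵢ₊ₖ} ρ = k/n, ρ(γᵢ) > 0 and k‖ρ'‖_∞ ≤ n ρ(γᵢ)²/2, then
γᵢ₊ₖ − γᵢ = (k/(n ρ(γᵢ)))(1 + O(k‖ρ'‖_∞/(n ρ(γᵢ)²))) with an absolute constant. -/
theorem stmt11 :
    ∃ C : ℝ, 0 < C ∧
      ∀ (n k : ℕ), 0 < n → 0 < k → ∀ (K : ℝ) (ρ : ℝ → ℝ),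
        (∀ x, 0 ≤ ρ x) → Differentiable ℝ ρ → (∀ x, |deriv ρ x| ≤ K) →
        ∀ γi γik : ℝ, γi < γik →
          (∫ x in Set.Ioc γi γik, ρ x) = (k : ℝ) / (n : ℝ) →
          0 < ρ γi → (k : ℝ) * K ≤ (n : ℝ) * (ρ γi) ^ 2 / 2 →
          |γik - γi - (k : ℝ) / ((n : ℝ) * ρ γi)|
            ≤ C * ((k : ℝ) / ((n : ℝ) * ρ γi)) * ((k : ℝ) * K / ((n : ℝ) * (ρ γi) ^ 2)) := by
  refine ⟨2, two_pos, fun n k hn hk K ρ hnn hd hK γi γik hlt hint hr hkK => ?_⟩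
  have hn' : (0 : ℝ) < n := Nat.cast_pos.2 hn
  have hkK' : 2 * ((k : ℝ) / n) * K ≤ ρ γi ^ 2 := by
    rw [mul_div_assoc', div_mul_eq_mul_div, div_le_iff₀ hn']
    linarith
  have h := abs_sub_div_le_of_integral_eq (fun x _ => hnn x) hd (fun x _ => hK x) hlt
    (by rwa [integral_of_le hlt.le]) (by positivity) hr hkK'
  simpa only [div_mul_eq_mul_div, div_div] using h
end

section
/- Let γ_1 < γ_2 < ⋯ < γ_n be reals and ρ a probability density with ∫_{−∞}^{γ_j} ρ(x)dx = (j−1/2)/n for each j. Then for any index i and any 1 ≤ d ≤ i−1, |∫_{−∞}^{γ_{i−d}} ρ(x)/(γ_i − x) dx − ∑_{j=1}^{i−d} 1/(n(γ_i − γ_j))| ≤ 1/(n(γ_i − γ_{i−d})). -/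
/-!
Write `c = γ_i` and cut `(-∞, γ_k]` into `(-∞, γ_1]`, of mass `1/(2n)`, and the cells
`(γ_j, γ_{j+1}]`, each of mass `1/n`. On a cell the kernel `1/(c - x)` lies between its values at
the endpoints, so the integral over the cell lies between `1/(n(c - γ_j))` and
`1/(n(c - γ_{j+1}))`. Summing, the integral over `(-∞, γ_k]` lies between the Riemann sums
`∑_{j<k}` and `∑_{j≤k}` of `1/(n(c - γ_j))`, which differ by the last term.
-/

open MeasureTheory Finset Set

section Kernel

variable {ρ : ℝ → ℝ} {s : Set ℝ} {a b c : ℝ}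

theorem integrableOn_div_sub (hρ : IntegrableOn ρ s) (hs : MeasurableSet s) (hbc : b < c)
    (hsb : ∀ x ∈ s, x ≤ b) : IntegrableOn (fun x => ρ x / (c - x)) s := by
  refine (hρ.div_const (c - b)).mono (hρ.1.div₀ (by fun_prop))
    ((ae_restrict_iff' hs).2 (ae_of_all _ fun x hx => ?_))
  have hcx : 0 < c - x := by linarith [hsb x hx]
  rw [norm_div, norm_div, Real.norm_of_nonneg hcx.le, Real.norm_of_nonneg (sub_pos.2 hbc).le]
  exact div_le_div_of_nonneg_left (norm_nonneg _) (by linarith) (by linarith [hsb x hx])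

variable (hs : MeasurableSet s) (hρ₀ : ∀ x ∈ s, 0 ≤ ρ x) (hρ : IntegrableOn ρ s) (hbc : b < c)
  (hsb : ∀ x ∈ s, x ≤ b)
include hs hρ₀ hρ hbc hsb

theorem setIntegral_div_sub_le :
    ∫ x in s, ρ x / (c - x) ≤ (∫ x in s, ρ x) / (c - b) := by
  rw [← integral_div]
  refine setIntegral_mono_on (integrableOn_div_sub hρ hs hbc hsb) (hρ.div_const _) hs ?_
  intro x hx
  exact div_le_div_of_nonneg_left (hρ₀ x hx) (by linarith) (by linarith [hsb x hx])

theorem setIntegral_div_le_setIntegral_div_sub (has : ∀ x ∈ s, a ≤ x) :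
    (∫ x in s, ρ x) / (c - a) ≤ ∫ x in s, ρ x / (c - x) := by
  rw [← integral_div]
  refine setIntegral_mono_on (hρ.div_const _) (integrableOn_div_sub hρ hs hbc hsb) hs ?_
  intro x hx
  exact div_le_div_of_nonneg_left (hρ₀ x hx) (by linarith [hsb x hx]) (by linarith [has x hx])

end Kernel

theorem setIntegral_Iic_eq_add_Ioc {f : ℝ → ℝ} {a b : ℝ} (hab : a ≤ b)
    (hf : IntegrableOn f (Iic b)) :
    ∫ x in Iic b, f x = (∫ x in Iic a, f x) + ∫ x in Ioc a b, f x := by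
  rw [← intervalIntegral.integral_of_le hab,
    ← intervalIntegral.integral_Iic_sub_Iic (hf.mono_set (Iic_subset_Iic.2 hab)) hf]
  ring

theorem setIntegral_Iic_div_sub_mem_Icc {ρ : ℝ → ℝ} (hρ₀ : ∀ x, 0 ≤ ρ x) (hρ : Integrable ρ)
    {γ : ℕ → ℝ} {c m : ℝ} (hfirst : ∫ x in Iic (γ 1), ρ x ≤ m) {k : ℕ} (hk : 1 ≤ k)
    (hγ : ∀ j, 1 ≤ j → j < k → γ j < γ (j + 1)) (hγc : γ k < c)
    (hcell : ∀ j, 1 ≤ j → j < k → ∫ x in Ioc (γ j) (γ (j + 1)), ρ x = m) :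
    ∫ x in Iic (γ k), ρ x / (c - x) ∈
      Icc (∑ j ∈ Icc 1 k, m / (c - γ j) - m / (c - γ k)) (∑ j ∈ Icc 1 k, m / (c - γ j)) := by
  induction k, hk using Nat.le_induction with
  | base =>
    rw [Finset.Icc_self, sum_singleton, sub_self]
    refine ⟨setIntegral_nonneg measurableSet_Iic fun x hx => div_nonneg (hρ₀ x) ?_, ?_⟩
    · linarith [mem_Iic.1 hx]
    · calc ∫ x in Iic (γ 1), ρ x / (c - x)
          ≤ (∫ x in Iic (γ 1), ρ x) / (c - γ 1) :=
            setIntegral_div_sub_le measurableSet_Iic (fun x _ => hρ₀ x) hρ.integrableOn hγc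
              fun _ => id
        _ ≤ m / (c - γ 1) := div_le_div_of_nonneg_right hfirst (by linarith)
  | succ k hk ih =>
    have hstep : γ k < γ (k + 1) := hγ k hk k.lt_succ_self
    obtain ⟨ih_lower, ih_upper⟩ := ih (fun j hj hjk => hγ j hj (by omega)) (by linarith)
      (fun j hj hjk => hcell j hj (by omega))
    have hcell_k := hcell k hk k.lt_succ_self
    have hIoc : MeasurableSet (Ioc (γ k) (γ (k + 1))) := measurableSet_Ioc
    have hcell_lower := setIntegral_div_le_setIntegral_div_sub hIoc (fun x _ => hρ₀ x)
      hρ.integrableOn hγc (fun _ hx => hx.2) (fun _ hx => hx.1.le)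
    have hcell_upper := setIntegral_div_sub_le hIoc (fun x _ => hρ₀ x) hρ.integrableOn hγc
      (fun _ hx => hx.2)
    rw [hcell_k] at hcell_lower hcell_upper
    rw [setIntegral_Iic_eq_add_Ioc hstep.le
      (integrableOn_div_sub hρ.integrableOn measurableSet_Iic hγc fun _ => id),
      sum_Icc_succ_top (by omega)]
    constructor <;> linarith

theorem stmt12_general (n : ℕ) (ρ : ℝ → ℝ) (hρ : ∀ x, 0 ≤ ρ x)
    (hint : Integrable ρ)
    (γ : ℕ → ℝ)
    (hmono : ∀ j k : ℕ, 1 ≤ j → j < k → k ≤ n → γ j < γ k)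
    (hquant : ∀ j : ℕ, 1 ≤ j → j ≤ n →
      ∫ x in Set.Iic (γ j), ρ x = ((j : ℝ) - 1/2) / (n : ℝ))
    (i d : ℕ) (hi : i ≤ n) (hd1 : 1 ≤ d) (hd2 : d ≤ i - 1) :
    |(∫ x in Set.Iic (γ (i - d)), ρ x / (γ i - x))
        - ∑ j ∈ Finset.Icc 1 (i - d), 1 / ((n : ℝ) * (γ i - γ j))|
      ≤ 1 / ((n : ℝ) * (γ i - γ (i - d))) := by
  have hfirst : ∫ x in Iic (γ 1), ρ x ≤ 1 / n := by
    rw [hquant 1 le_rfl (by omega)]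
    gcongr
    norm_num
  have hcell : ∀ j, 1 ≤ j → j < i - d → ∫ x in Ioc (γ j) (γ (j + 1)), ρ x = 1 / n := by
    intro j hj hjk
    have hsplit := setIntegral_Iic_eq_add_Ioc (hmono j (j + 1) hj (by omega) (by omega)).le
      hint.integrableOn
    rw [hquant j hj (by omega), hquant (j + 1) (by omega) (by omega)] at hsplit
    push_cast at hsplit
    linarith [show ((j : ℝ) + 1 - 1 / 2) / n = (j - 1 / 2) / n + 1 / n by ring]
  have hγi : γ (i - d) < γ i := hmono (i - d) i (by omega) (by omega) hi
  obtain ⟨hlower, hupper⟩ :=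
    setIntegral_Iic_div_sub_mem_Icc hρ hint hfirst (by omega : 1 ≤ i - d)
    (fun j hj hjk => hmono j (j + 1) hj (by omega) (by omega)) hγi hcell
  simp only [div_div] at hlower hupper
  have hlast : 0 ≤ 1 / ((n : ℝ) * (γ i - γ (i - d))) :=
    one_div_nonneg.2 (mul_nonneg n.cast_nonneg (by linarith))
  exact abs_sub_le_iff.2 ⟨by linarith, by linarith⟩

/-- Discrete approximation of the truncated Hilbert transform by quantiles. -/
theorem stmt12 (n : ℕ) (hn : 1 ≤ n) (ρ : ℝ → ℝ) (hρ : ∀ x, 0 ≤ ρ x)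
    (hint : Integrable ρ) (hprob : ∫ x, ρ x = 1)
    (γ : ℕ → ℝ)
    (hmono : ∀ j k : ℕ, 1 ≤ j → j < k → k ≤ n → γ j < γ k)
    (hquant : ∀ j : ℕ, 1 ≤ j → j ≤ n →
      ∫ x in Set.Iic (γ j), ρ x = ((j : ℝ) - 1/2) / (n : ℝ))
    (i d : ℕ) (hi : i ≤ n) (hd1 : 1 ≤ d) (hd2 : d ≤ i - 1) :
    |(∫ x in Set.Iic (γ (i - d)), ρ x / (γ i - x))
        - ∑ j ∈ Finset.Icc 1 (i - d), 1 / ((n : ℝ) * (γ i - γ j))|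
      ≤ 1 / ((n : ℝ) * (γ i - γ (i - d))) :=
  stmt12_general n ρ hρ hint γ hmono hquant i d hi hd1 hd2
end
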